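/- arXiv:2401.11655 — 5 statements merged into one kernel-verified Lean document; each statement's English description precedes it below -/
import Mathlib

section
/- Let 𝕊 be a finite set, and for each i ∈ 𝕊 let λ_i : ℝ → ℝ be continuous and μ_i ≥ 1 a constant. Let t_0 < t_1 < ⋯ < t_k < t_{k+1} be real numbers and i_0, …, i_k ∈ 𝕊. For each 0 ≤ l ≤ k let v_l : [t_l, t_{l+1}] → ℝ be continuous, nonnegative, differentiable on (t_l, t_{l+1}), with v_l'(s) ≤ λ_{i_l}(s)·v_l(s) for all s ∈ (t_l, t_{l+1}), and suppose v_l(t_l) ≤ μ_{i_l}·v_{l−1}(t_l) for each 1 ≤ l ≤ k. Then for every t ∈ [t_k, t_{k+1}], v_k(t) ≤ v_0(t_0) · (∏_{l=1}^{k} μ_{i_l}) · exp( Σ_{l=0}^{k−1} ∫_{t_l}^{t_{l+1}} λ_{i_l}(h) dh + ∫_{t_k}^{t} λ_{i_k}(h) dh ). -/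
open Set

/-! On each dwell interval `v l * exp (-∫ λ)` has nonpositive derivative, so it is antitone and
`v l` grows at most by the factor `exp (∫ λ)` across the interval (Grönwall). At a switching time
the value is multiplied by at most `μ ≥ 0`, so chaining the interval estimates through the
switching times multiplies the factors and adds the integrals. -/

section Gronwall

variable {lam v : ℝ → ℝ} {a b : ℝ}

theorem antitoneOn_mul_exp_neg_integral (hlam : Continuous lam)
    (hc : ContinuousOn v (Icc a b)) (hd : DifferentiableOn ℝ v (Ioo a b))
    (hder : ∀ s ∈ Ioo a b, deriv v s ≤ lam s * v s) :
    AntitoneOn (fun s => v s * Real.exp (-∫ h in a..s, lam h)) (Icc a b) := by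
  set F : ℝ → ℝ := fun s => ∫ h in a..s, lam h
  have hF : ∀ s, HasDerivAt F (lam s) s := fun s =>
    (hlam.integral_hasStrictDerivAt a s).hasDerivAt
  have hFc : Continuous F := continuous_iff_continuousAt.2 fun s => (hF s).continuousAt
  have hg : ∀ s ∈ Ioo a b, HasDerivAt (fun s => v s * Real.exp (-F s))
      ((deriv v s - lam s * v s) * Real.exp (-F s)) s := by
    intro s hs
    have hv := ((hd s hs).differentiableAt (isOpen_Ioo.mem_nhds hs)).hasDerivAt
    exact (hv.mul (hF s).neg.exp).congr_deriv (by simp only [Pi.neg_apply]; ring)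
  rw [← interior_Icc] at hg
  refine antitoneOn_of_deriv_nonpos (convex_Icc a b)
    (hc.mul (Real.continuous_exp.comp hFc.neg).continuousOn)
    (fun s hs => (hg s hs).differentiableAt.differentiableWithinAt) fun s hs => ?_
  rw [(hg s hs).deriv]
  rw [interior_Icc] at hs
  exact mul_nonpos_of_nonpos_of_nonneg (sub_nonpos.2 (hder s hs)) (Real.exp_pos _).le

theorem le_mul_exp_integral_of_deriv_le (hlam : Continuous lam)
    (hc : ContinuousOn v (Icc a b)) (hd : DifferentiableOn ℝ v (Ioo a b))
    (hder : ∀ s ∈ Ioo a b, deriv v s ≤ lam s * v s) {s : ℝ} (hs : s ∈ Icc a b) :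
    v s ≤ v a * Real.exp (∫ h in a..s, lam h) := by
  have hmono := antitoneOn_mul_exp_neg_integral hlam hc hd hder
    (left_mem_Icc.2 (hs.1.trans hs.2)) hs hs.1
  simp only [intervalIntegral.integral_same, neg_zero, Real.exp_zero, mul_one] at hmono
  calc v s = v s * Real.exp (-∫ h in a..s, lam h) * Real.exp (∫ h in a..s, lam h) := by
        rw [mul_assoc, ← Real.exp_add, neg_add_cancel, Real.exp_zero, mul_one]
    _ ≤ v a * Real.exp (∫ h in a..s, lam h) := by gcongr

end Gronwall

theorem le_mul_prod_mul_exp_of_switching {k : ℕ} {t : ℕ → ℝ} {v lam : ℕ → ℝ → ℝ}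
    {μ : ℕ → ℝ} (hμ : ∀ l, 0 ≤ μ l) (ht : ∀ l < k, t l ≤ t (l + 1))
    (hflow : ∀ l ≤ k, ∀ s ∈ Icc (t l) (t (l + 1)),
      v l s ≤ v l (t l) * Real.exp (∫ h in (t l)..s, lam l h))
    (hjump : ∀ l < k, v (l + 1) (t (l + 1)) ≤ μ (l + 1) * v l (t (l + 1))) :
    ∀ n ≤ k, ∀ s ∈ Icc (t n) (t (n + 1)),
      v n s ≤ v 0 (t 0) * (∏ l ∈ Finset.Icc 1 n, μ l) *
        Real.exp ((∑ l ∈ Finset.range n, ∫ h in (t l)..(t (l + 1)), lam l h) +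
          ∫ h in (t n)..s, lam n h) := by
  intro n hn
  induction n with
  | zero => simpa using hflow 0 (Nat.zero_le k)
  | succ n ih =>
    intro s hs
    have hprev := ih (by omega) (t (n + 1)) ⟨ht n (by omega), le_rfl⟩
    rw [Finset.sum_range_succ, Finset.prod_Icc_succ_top (Nat.le_add_left 1 n),
      Real.exp_add]
    set E := Real.exp (∫ h in (t (n + 1))..s, lam (n + 1) h)
    calc v (n + 1) s ≤ v (n + 1) (t (n + 1)) * E := hflow (n + 1) hn s hs
      _ ≤ μ (n + 1) * v n (t (n + 1)) * E := by gcongr; exact hjump n hn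
      _ ≤ μ (n + 1) * (v 0 (t 0) * (∏ l ∈ Finset.Icc 1 n, μ l) *
            Real.exp ((∑ l ∈ Finset.range n, ∫ h in (t l)..(t (l + 1)), lam l h) +
              ∫ h in (t n)..(t (n + 1)), lam n h)) * E := by gcongr; exact hμ _
      _ = _ := by ring

theorem stmt_1_general {𝕊 : Type*} (lam : 𝕊 → ℝ → ℝ) (μ : 𝕊 → ℝ)
    (hlam : ∀ i, Continuous (lam i)) (hμ : ∀ i, 1 ≤ μ i)
    (k : ℕ) (t : ℕ → ℝ) (ht : ∀ l ≤ k, t l < t (l + 1))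
    (idx : ℕ → 𝕊) (v : ℕ → ℝ → ℝ)
    (hv_cont : ∀ l ≤ k, ContinuousOn (v l) (Set.Icc (t l) (t (l + 1))))
    (hv_diff : ∀ l ≤ k, DifferentiableOn ℝ (v l) (Set.Ioo (t l) (t (l + 1))))
    (hv_deriv : ∀ l ≤ k, ∀ s ∈ Set.Ioo (t l) (t (l + 1)),
      deriv (v l) s ≤ lam (idx l) s * v l s)
    (hjump : ∀ l, 1 ≤ l → l ≤ k → v l (t l) ≤ μ (idx l) * v (l - 1) (t l)) :
    ∀ s ∈ Set.Icc (t k) (t (k + 1)),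
      v k s ≤ v 0 (t 0) * (∏ l ∈ Finset.Icc 1 k, μ (idx l)) *
        Real.exp ((∑ l ∈ Finset.range k, ∫ h in (t l)..(t (l + 1)), lam (idx l) h) +
          ∫ h in (t k)..s, lam (idx k) h) :=
  le_mul_prod_mul_exp_of_switching (lam := fun l => lam (idx l))
    (fun l => zero_le_one.trans (hμ (idx l))) (fun l hl => (ht l hl.le).le)
    (fun l hl _ hs => le_mul_exp_integral_of_deriv_le (hlam _) (hv_cont l hl) (hv_diff l hl)
      (hv_deriv l hl) hs)
    (fun l hl => by simpa using hjump (l + 1) l.succ_pos hl) k le_rfl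

/-- Iterated estimate for indefinite multiple Lyapunov functions along a switched
trajectory: on each dwell interval `[t_l, t_{l+1}]` the Lyapunov value obeys
`v' ≤ λ_{i_l} · v`, and at each switching time it may jump up by a factor `μ_{i_l} ≥ 1`. -/
theorem stmt_1 {𝕊 : Type*} [Fintype 𝕊] (lam : 𝕊 → ℝ → ℝ) (μ : 𝕊 → ℝ)
    (hlam : ∀ i, Continuous (lam i)) (hμ : ∀ i, 1 ≤ μ i)
    (k : ℕ) (t : ℕ → ℝ) (ht : ∀ l ≤ k, t l < t (l + 1))
    (idx : ℕ → 𝕊) (v : ℕ → ℝ → ℝ)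
    (hv_cont : ∀ l ≤ k, ContinuousOn (v l) (Set.Icc (t l) (t (l + 1))))
    (hv_nonneg : ∀ l ≤ k, ∀ s ∈ Set.Icc (t l) (t (l + 1)), 0 ≤ v l s)
    (hv_diff : ∀ l ≤ k, DifferentiableOn ℝ (v l) (Set.Ioo (t l) (t (l + 1))))
    (hv_deriv : ∀ l ≤ k, ∀ s ∈ Set.Ioo (t l) (t (l + 1)),
      deriv (v l) s ≤ lam (idx l) s * v l s)
    (hjump : ∀ l, 1 ≤ l → l ≤ k → v l (t l) ≤ μ (idx l) * v (l - 1) (t l)) :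
    ∀ s ∈ Set.Icc (t k) (t (k + 1)),
      v k s ≤ v 0 (t 0) * (∏ l ∈ Finset.Icc 1 k, μ (idx l)) *
        Real.exp ((∑ l ∈ Finset.range k, ∫ h in (t l)..(t (l + 1)), lam (idx l) h) +
          ∫ h in (t k)..s, lam (idx k) h) :=
  stmt_1_general lam μ hlam hμ k t ht idx v hv_cont hv_diff hv_deriv hjump
end

section
/- In the renewal setup, almost surely N(t)/t → 1/θ as t → ∞. -/
open Set Filter MeasureTheory ProbabilityTheory

/-- The renewal (arrival) times: `renewalTime S k ω = S 1 ω + ⋯ + S k ω`, with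
`renewalTime S 0 ω = 0`. -/
noncomputable def renewalTime {Ω : Type*} (S : ℕ → Ω → ℝ) (k : ℕ) (ω : Ω) : ℝ :=
  ∑ j ∈ Finset.Icc 1 k, S j ω

open Topology Function

/-!
By the strong law of large numbers, `t_n / n → θ` almost surely. Along such a sample path,
`t_{N(t)} ≤ t < t_{N(t)+1}` forces `N(t) → ∞`, so dividing by `N(t)` squeezes `t / N(t)`
between two quantities tending to `θ`.
-/

theorem renewalTime_eq_sum_range {Ω : Type*} (S : ℕ → Ω → ℝ) (n : ℕ) (ω : Ω) :
    renewalTime S n ω = ∑ i ∈ Finset.range n, S (i + 1) ω := by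
  rw [renewalTime, Finset.range_eq_Ico, Finset.sum_Ico_add' (fun j => S j ω)]
  rfl

theorem ae_tendsto_renewalTime_div {Ω : Type*} [MeasureSpace Ω] (S : ℕ → Ω → ℝ)
    (hSindep : iIndepFun S ℙ) (hSident : ∀ k ≥ 1, IdentDistrib (S k) (S 1) ℙ ℙ)
    (hSint : Integrable (S 1) ℙ) :
    ∀ᵐ ω ∂ℙ, Tendsto (fun n : ℕ => renewalTime S n ω / n) atTop (𝓝 (∫ ω, S 1 ω ∂ℙ)) := by
  have hindep : Pairwise ((· ⟂ᵢ[ℙ] ·) on fun i => S (i + 1)) := fun i j hij =>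
    hSindep.indepFun (by omega)
  filter_upwards [strong_law_ae_real (fun i => S (i + 1)) hSint hindep
    fun i => hSident (i + 1) (by omega)] with ω hω
  simpa only [renewalTime_eq_sum_range] using hω

theorem tendsto_atTop_of_lt_apply_succ {a : ℕ → ℝ} {N : ℝ → ℕ}
    (hN : ∀ᶠ t in atTop, t < a (N t + 1)) : Tendsto N atTop atTop := by
  refine tendsto_atTop.2 fun m => ?_
  obtain ⟨B, hB⟩ := ((Set.finite_Iic m).image a).bddAbove
  filter_upwards [hN, eventually_ge_atTop B] with t ht htB
  by_contra! hlt
  exact (ht.trans_le (hB ⟨N t + 1, Set.mem_Iic.2 hlt, rfl⟩)).not_ge htB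

theorem tendsto_apply_succ_div_of_tendsto_div {a : ℕ → ℝ} {θ : ℝ}
    (ha : Tendsto (fun n : ℕ => a n / n) atTop (𝓝 θ)) :
    Tendsto (fun n : ℕ => a (n + 1) / n) atTop (𝓝 θ) := by
  have hshift : Tendsto (fun n : ℕ => a (n + 1) / (n + 1 : ℕ)) atTop (𝓝 θ) :=
    ha.comp (tendsto_add_atTop_nat 1)
  have hratio : Tendsto (fun n : ℕ => ((n : ℝ) / (n + 1))⁻¹) atTop (𝓝 1) := by
    simpa using (tendsto_natCast_div_add_atTop (1 : ℝ)).inv₀ one_ne_zero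
  refine (by simpa using hshift.mul hratio : Tendsto _ atTop (𝓝 θ)).congr' ?_
  filter_upwards [eventually_ne_atTop 0] with n hn
  have : (n : ℝ) + 1 ≠ 0 := by positivity
  field_simp

theorem tendsto_counting_div_of_tendsto_div {a : ℕ → ℝ} {θ : ℝ} (hθ : θ ≠ 0)
    (ha : Tendsto (fun n : ℕ => a n / n) atTop (𝓝 θ)) {N : ℝ → ℕ}
    (hN : ∀ᶠ t in atTop, a (N t) ≤ t ∧ t < a (N t + 1)) :
    Tendsto (fun t : ℝ => (N t : ℝ) / t) atTop (𝓝 θ⁻¹) := by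
  have hNtop : Tendsto N atTop atTop := tendsto_atTop_of_lt_apply_succ (hN.mono fun _ h => h.2)
  have hsqueeze : Tendsto (fun t : ℝ => t / N t) atTop (𝓝 θ) := by
    refine tendsto_of_tendsto_of_tendsto_of_le_of_le' (ha.comp hNtop)
      ((tendsto_apply_succ_div_of_tendsto_div ha).comp hNtop) ?_ ?_ <;>
    filter_upwards [hN] with t ht
    · exact div_le_div_of_nonneg_right ht.1 (Nat.cast_nonneg _)
    · exact div_le_div_of_nonneg_right ht.2.le (Nat.cast_nonneg _)
  simpa only [inv_div] using hsqueeze.inv₀ hθ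

theorem stmt_5_general {Ω : Type*} [MeasureSpace Ω]
    (S : ℕ → Ω → ℝ)
    (hSindep : iIndepFun S ℙ)
    (hSident : ∀ k ≥ 1, IdentDistrib (S k) (S 1) ℙ ℙ)
    (hSint : Integrable (S 1) ℙ)
    (θ : ℝ) (hθpos : 0 < θ) (hθ : (∫ ω, S 1 ω ∂ℙ) = θ)
    (N : ℝ → Ω → ℕ)
    (hN : ∀ᵐ ω ∂ℙ, ∀ t ≥ (0 : ℝ),
      renewalTime S (N t ω) ω ≤ t ∧ t < renewalTime S (N t ω + 1) ω) :
    ∀ᵐ ω ∂ℙ,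
      Filter.Tendsto (fun t : ℝ => (N t ω : ℝ) / t) Filter.atTop (nhds (1 / θ)) := by
  filter_upwards [ae_tendsto_renewalTime_div S hSindep hSident hSint, hN] with ω hlim hωN
  rw [one_div]
  exact tendsto_counting_div_of_tendsto_div hθpos.ne' (hθ ▸ hlim)
    ((eventually_ge_atTop 0).mono hωN)

/-- Elementary renewal theorem (almost sure version): if the dwell times `(S k)_{k ≥ 1}`
are i.i.d., almost surely positive, with mean `0 < θ < ∞`, and `N t` is the renewal
counting process (characterized by `t_{N(t)} ≤ t < t_{N(t)+1}`), then almost surely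
`N t / t → 1 / θ` as `t → ∞`. -/
theorem stmt_5 {Ω : Type*} [MeasureSpace Ω] [IsProbabilityMeasure (ℙ : Measure Ω)]
    (S : ℕ → Ω → ℝ) (hSmeas : ∀ k, Measurable (S k))
    (hSindep : iIndepFun S ℙ)
    (hSident : ∀ k ≥ 1, IdentDistrib (S k) (S 1) ℙ ℙ)
    (hSpos : ∀ᵐ ω ∂ℙ, 0 < S 1 ω)
    (hSint : Integrable (S 1) ℙ)
    (θ : ℝ) (hθpos : 0 < θ) (hθ : (∫ ω, S 1 ω ∂ℙ) = θ)
    (N : ℝ → Ω → ℕ)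
    (hN : ∀ᵐ ω ∂ℙ, ∀ t ≥ (0 : ℝ),
      renewalTime S (N t ω) ω ≤ t ∧ t < renewalTime S (N t ω + 1) ω) :
    ∀ᵐ ω ∂ℙ,
      Filter.Tendsto (fun t : ℝ => (N t ω : ℝ) / t) Filter.atTop (nhds (1 / θ)) :=
  stmt_5_general S hSindep hSident hSint θ hθpos hθ N hN
end

section
/- In the renewal setup, let (W_k)_{k≥1} be an i.i.d. sequence of integrable real random variables on the same probability space with E[W₁] = w (no independence between (W_k) and (S(k)) is assumed). Then for each l ∈ {0, 1}, almost surely (1/t)·Σ_{k=1}^{N(t)+l} W_k → w/θ as t → ∞. -/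
/-!
Both partial-sum sequences obey the strong law: `t_n / n → θ` and `(W_1 + ⋯ + W_n) / n → w`
almost surely. Everything else is deterministic. Since `t < t_{N(t)+1}`, the counts `N(t)`
tend to infinity, and squeezing `t / N(t)` between `t_{N(t)} / N(t)` and `t_{N(t)+1} / N(t)`
gives `N(t) / t → 1 / θ`. Finally
`(W_1 + ⋯ + W_{N(t)+l}) / t = (W_1 + ⋯ + W_{N(t)+l}) / N(t) · N(t) / t → w / θ`.
-/

open Set Filter MeasureTheory ProbabilityTheory Topology

namespace ProbabilityTheory

theorem strong_law_ae_real_Icc {Ω : Type*} {m : MeasurableSpace Ω} {μ : Measure Ω}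
    (X : ℕ → Ω → ℝ) (hint : Integrable (X 1) μ)
    (hindep : ∀ i j, 1 ≤ i → 1 ≤ j → i ≠ j → X i ⟂ᵢ[μ] X j)
    (hident : ∀ i ≥ 1, IdentDistrib (X i) (X 1) μ μ) :
    ∀ᵐ ω ∂μ, Tendsto (fun n : ℕ => (∑ i ∈ Finset.Icc 1 n, X i ω) / n) atTop (𝓝 μ[X 1]) := by
  filter_upwards [strong_law_ae_real (fun i => X (i + 1)) hint
    (fun i j hij => hindep _ _ (by omega) (by omega) (by simpa using hij))
    (fun i => hident (i + 1) (by omega))] with ω hω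
  convert hω using 3 with n
  rw [← Finset.Ico_add_one_right_eq_Icc, Finset.sum_Ico_eq_sum_range, Nat.add_sub_cancel]
  simp only [add_comm 1]

end ProbabilityTheory

theorem tendsto_add_div_natCast {a : ℕ → ℝ} {θ : ℝ}
    (ha : Tendsto (fun n : ℕ => a n / n) atTop (𝓝 θ)) (l : ℕ) :
    Tendsto (fun n : ℕ => a (n + l) / n) atTop (𝓝 θ) := by
  have hshift : Tendsto (fun n : ℕ => a (n + l) / ((n + l : ℕ) : ℝ)) atTop (𝓝 θ) :=
    ha.comp (tendsto_add_atTop_nat l)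
  have hratio : Tendsto (fun n : ℕ => ((n + l : ℕ) : ℝ) / n) atTop (𝓝 1) := by
    have h := (tendsto_const_nhds (x := (1 : ℝ))).add
      (tendsto_const_div_atTop_nhds_zero_nat (l : ℝ))
    refine (add_zero (1 : ℝ) ▸ h).congr' ?_
    filter_upwards [eventually_ne_atTop 0] with n hn
    rw [Nat.cast_add, add_div, div_self (Nat.cast_ne_zero.2 hn)]
  refine (mul_one θ ▸ hshift.mul hratio).congr' ?_
  filter_upwards [eventually_ne_atTop 0] with n hn
  have : ((n + l : ℕ) : ℝ) ≠ 0 := Nat.cast_ne_zero.2 (by omega)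
  field_simp

section Counting

variable {a : ℕ → ℝ} {N : ℝ → ℕ}

theorem tendsto_atTop_of_lt_succ (h : ∀ᶠ t in atTop, t < a (N t + 1)) :
    Tendsto N atTop atTop := by
  refine tendsto_atTop.2 fun K => ?_
  obtain ⟨M, hM⟩ := ((Set.finite_Iic K).image a).bddAbove
  filter_upwards [h, eventually_gt_atTop M] with t ht htM
  by_contra! hK
  have : a (N t + 1) ≤ M := hM ⟨N t + 1, Set.mem_Iic.2 hK, rfl⟩
  linarith

theorem tendsto_natCast_div_of_mem_Ico {θ : ℝ} (hθ : θ ≠ 0)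
    (ha : Tendsto (fun n : ℕ => a n / n) atTop (𝓝 θ))
    (hN : ∀ᶠ t in atTop, t ∈ Ico (a (N t)) (a (N t + 1))) :
    Tendsto (fun t => (N t : ℝ) / t) atTop (𝓝 θ⁻¹) := by
  have hNtop := tendsto_atTop_of_lt_succ (hN.mono fun _ ht => ht.2)
  have hdiv : Tendsto (fun t => t / (N t : ℝ)) atTop (𝓝 θ) := by
    refine tendsto_of_tendsto_of_tendsto_of_le_of_le' (ha.comp hNtop)
      ((tendsto_add_div_natCast ha 1).comp hNtop) ?_ ?_
    · filter_upwards [hN] with t ht using div_le_div_of_nonneg_right ht.1 (Nat.cast_nonneg _)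
    · filter_upwards [hN] with t ht using div_le_div_of_nonneg_right ht.2.le (Nat.cast_nonneg _)
  simpa only [inv_div] using hdiv.inv₀ hθ

theorem tendsto_partialSum_div_of_mem_Ico {b : ℕ → ℝ} {θ w : ℝ} (hθ : θ ≠ 0)
    (ha : Tendsto (fun n : ℕ => a n / n) atTop (𝓝 θ))
    (hb : Tendsto (fun n : ℕ => b n / n) atTop (𝓝 w))
    (hN : ∀ᶠ t in atTop, t ∈ Ico (a (N t)) (a (N t + 1))) (l : ℕ) :
    Tendsto (fun t => b (N t + l) / t) atTop (𝓝 (w / θ)) := by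
  have hNtop := tendsto_atTop_of_lt_succ (hN.mono fun _ ht => ht.2)
  refine ((tendsto_add_div_natCast hb l).comp hNtop |>.mul
    (tendsto_natCast_div_of_mem_Ico hθ ha hN)).congr' ?_
  filter_upwards [hNtop.eventually_ge_atTop 1] with t hpos
  have : (N t : ℝ) ≠ 0 := by positivity
  simp only [Function.comp_apply]
  field_simp

end Counting

theorem stmt_6_general {Ω : Type*} [MeasureSpace Ω]
    (S : ℕ → Ω → ℝ)
    (hSindep : iIndepFun S ℙ)
    (hSident : ∀ k ≥ 1, IdentDistrib (S k) (S 1) ℙ ℙ)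
    (hSint : Integrable (S 1) ℙ)
    (θ : ℝ) (hθpos : 0 < θ) (hθ : (∫ ω, S 1 ω ∂ℙ) = θ)
    (N : ℝ → Ω → ℕ)
    (hN : ∀ᵐ ω ∂ℙ, ∀ t ≥ (0 : ℝ),
      renewalTime S (N t ω) ω ≤ t ∧ t < renewalTime S (N t ω + 1) ω)
    (W : ℕ → Ω → ℝ)
    (hWindep : iIndepFun W ℙ)
    (hWident : ∀ k ≥ 1, IdentDistrib (W k) (W 1) ℙ ℙ)
    (hWint : Integrable (W 1) ℙ)
    (w : ℝ) (hw : (∫ ω, W 1 ω ∂ℙ) = w) :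
    ∀ l ∈ ({0, 1} : Set ℕ),
      ∀ᵐ ω ∂ℙ,
        Filter.Tendsto (fun t : ℝ => (∑ k ∈ Finset.Icc 1 (N t ω + l), W k ω) / t)
          Filter.atTop (nhds (w / θ)) := by
  intro l _
  filter_upwards [strong_law_ae_real_Icc S hSint (fun _ _ _ _ hij => hSindep.indepFun hij)
      hSident,
    strong_law_ae_real_Icc W hWint (fun _ _ _ _ hij => hWindep.indepFun hij) hWident,
    hN] with ω hSω hWω hNω
  rw [hθ] at hSω
  rw [hw] at hWω
  exact tendsto_partialSum_div_of_mem_Ico (b := fun n => ∑ k ∈ Finset.Icc 1 n, W k ω)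
    hθpos.ne' hSω hWω ((eventually_ge_atTop 0).mono hNω) l

/-- In the renewal setup, if `(W k)_{k ≥ 1}` is an i.i.d. integrable sequence with mean
`w` (no independence between `(W k)` and the dwell times `(S k)` is assumed), then for each
`l ∈ {0, 1}`, almost surely `(1/t) · Σ_{k=1}^{N(t)+l} W k → w / θ` as `t → ∞`. -/
theorem stmt_6 {Ω : Type*} [MeasureSpace Ω] [IsProbabilityMeasure (ℙ : Measure Ω)]
    (S : ℕ → Ω → ℝ) (hSmeas : ∀ k, Measurable (S k))
    (hSindep : iIndepFun S ℙ)
    (hSident : ∀ k ≥ 1, IdentDistrib (S k) (S 1) ℙ ℙ)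
    (hSpos : ∀ᵐ ω ∂ℙ, 0 < S 1 ω)
    (hSint : Integrable (S 1) ℙ)
    (θ : ℝ) (hθpos : 0 < θ) (hθ : (∫ ω, S 1 ω ∂ℙ) = θ)
    (N : ℝ → Ω → ℕ)
    (hN : ∀ᵐ ω ∂ℙ, ∀ t ≥ (0 : ℝ),
      renewalTime S (N t ω) ω ≤ t ∧ t < renewalTime S (N t ω + 1) ω)
    (W : ℕ → Ω → ℝ) (hWmeas : ∀ k, Measurable (W k))
    (hWindep : iIndepFun W ℙ)
    (hWident : ∀ k ≥ 1, IdentDistrib (W k) (W 1) ℙ ℙ)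
    (hWint : Integrable (W 1) ℙ)
    (w : ℝ) (hw : (∫ ω, W 1 ω ∂ℙ) = w) :
    ∀ l ∈ ({0, 1} : Set ℕ),
      ∀ᵐ ω ∂ℙ,
        Filter.Tendsto (fun t : ℝ => (∑ k ∈ Finset.Icc 1 (N t ω + l), W k ω) / t)
          Filter.atTop (nhds (w / θ)) :=
  stmt_6_general S hSindep hSident hSint θ hθpos hθ N hN W hWindep hWident hWint w hw
end

section
/- In the switched trajectory setup, assume additionally that there are class-K∞ functions α₁, α₂ with α₁(‖y‖) ≤ V_i(t, y) ≤ α₂(‖y‖) for all i ∈ 𝕊, t ≥ t₀ and y ∈ ℝⁿ, and that the Lyapunov conditions (ii) and (iii) hold. If there is a constant c < 0 such that g(t)/(t − t₀) → c as t → ∞, then: (a) x(t) → 0 as t → ∞; (b) sup_{t ≥ t₀} g(t) < ∞, and with M = exp(sup_{t ≥ t₀} g(t)) one has α₁(‖x(t)‖) ≤ M·α₂(‖x(t₀)‖) for all t ≥ t₀. -/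
open Set Filter MeasureTheory Topology

/-- A function `α : [0,∞) → [0,∞)` is of class K∞ if it is continuous, strictly
increasing, vanishes at `0`, and tends to infinity. -/
def IsClassKInf (α : ℝ → ℝ) : Prop :=
  ContinuousOn α (Set.Ici 0) ∧ StrictMonoOn α (Set.Ici 0) ∧ α 0 = 0 ∧
    (∀ s ≥ (0 : ℝ), 0 ≤ α s) ∧ Filter.Tendsto α Filter.atTop Filter.atTop

/-- Switched trajectory with K∞-sandwiched indefinite multiple Lyapunov functions:
if the drift functional `g` satisfies `g t / (t - t₀) → c < 0`, then the trajectory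
converges to `0`; moreover `g` is bounded above on `[t₀, ∞)` and with
`M = exp (sup g)` one has `α₁ ‖x t‖ ≤ M · α₂ ‖x t₀‖` for all `t ≥ t₀`. -/
theorem stmt_9 {𝕊 : Type*} [Fintype 𝕊] (n : ℕ)
    (t : ℕ → ℝ) (ht_mono : StrictMono t)
    (ht_top : Filter.Tendsto t Filter.atTop Filter.atTop)
    (idx : ℕ → 𝕊)
    (σf : ℝ → 𝕊) (hσ : ∀ k, ∀ s ∈ Set.Ico (t k) (t (k + 1)), σf s = idx k)
    (x : ℝ → EuclideanSpace ℝ (Fin n)) (hx_cont : ContinuousOn x (Set.Ici (t 0)))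
    (lam : 𝕊 → ℝ → ℝ) (hlam : ∀ i, Continuous (lam i))
    (μ : 𝕊 → ℝ) (hμ : ∀ i, 1 ≤ μ i)
    (V : 𝕊 → ℝ → EuclideanSpace ℝ (Fin n) → ℝ)
    (α₁ α₂ : ℝ → ℝ) (hα₁ : IsClassKInf α₁) (hα₂ : IsClassKInf α₂)
    (hsandwich : ∀ i, ∀ s ≥ t 0, ∀ y : EuclideanSpace ℝ (Fin n),
      α₁ ‖y‖ ≤ V i s y ∧ V i s y ≤ α₂ ‖y‖)
    -- Lyapunov condition (ii)
    (hV_cont : ∀ k, ContinuousOn (fun s => V (idx k) s (x s)) (Set.Icc (t k) (t (k + 1))))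
    (hV_diff : ∀ k, DifferentiableOn ℝ (fun s => V (idx k) s (x s))
      (Set.Ioo (t k) (t (k + 1))))
    (hV_deriv : ∀ k, ∀ s ∈ Set.Ioo (t k) (t (k + 1)),
      deriv (fun s' => V (idx k) s' (x s')) s ≤ lam (idx k) s * V (idx k) s (x s))
    -- Lyapunov condition (iii)
    (hjump : ∀ k, V (idx (k + 1)) (t (k + 1)) (x (t (k + 1))) ≤
      μ (idx (k + 1)) * V (idx k) (t (k + 1)) (x (t (k + 1))))
    -- the drift functional
    (g : ℝ → ℝ)
    (hg : ∀ k, ∀ s ∈ Set.Ico (t k) (t (k + 1)),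
      g s = (∫ h in (t 0)..s, lam (σf h) h) + ∑ l ∈ Finset.Icc 1 k, Real.log (μ (idx l)))
    (c : ℝ) (hc : c < 0)
    (hglim : Filter.Tendsto (fun s => g s / (s - t 0)) Filter.atTop (nhds c)) :
    Filter.Tendsto x Filter.atTop (nhds 0) ∧
    BddAbove (g '' Set.Ici (t 0)) ∧
    ∀ s ≥ t 0, α₁ ‖x s‖ ≤ Real.exp (sSup (g '' Set.Ici (t 0))) * α₂ ‖x (t 0)‖ := by
  obtain ⟨hα₁c, hα₁m, hα₁0, hα₁nn, hα₁top⟩ := hα₁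
  obtain ⟨hα₂c, hα₂m, hα₂0, hα₂nn, hα₂top⟩ := hα₂
  have htlt : ∀ k, t k < t (k + 1) := fun k => ht_mono (Nat.lt_succ_self k)
  have ht0le : ∀ k, t 0 ≤ t k := fun k => ht_mono.monotone (Nat.zero_le k)
  have hVnn : ∀ i s, t 0 ≤ s → (0:ℝ) ≤ V i s (x s) := fun i s hs =>
    le_trans (hα₁nn _ (norm_nonneg _)) ((hsandwich i s hs _).1)
  -- the primitive of each `lam i` has derivative `lam i`
  have hFd : ∀ (i : 𝕊) (a s : ℝ), HasDerivAt (fun u => ∫ h in a..u, lam i h) (lam i s) s := by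
    intro i a s
    exact intervalIntegral.integral_hasDerivAt_right ((hlam i).intervalIntegrable _ _)
      ((hlam i).stronglyMeasurableAtFilter _ _) (hlam i).continuousAt
  have hFcont : ∀ (i : 𝕊) (a : ℝ), Continuous (fun u => ∫ h in a..u, lam i h) := by
    intro i a
    exact continuous_iff_continuousAt.2 fun s => (hFd i a s).continuousAt
  -- Grönwall estimate on each switching interval
  have gron : ∀ k, ∀ s ∈ Set.Icc (t k) (t (k + 1)),
      V (idx k) s (x s) ≤ V (idx k) (t k) (x (t k)) *
        Real.exp (∫ h in (t k)..s, lam (idx k) h) := by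
    intro k s hs
    set i := idx k
    set F : ℝ → ℝ := fun u => ∫ h in (t k)..u, lam i h with hF
    set W : ℝ → ℝ := fun u => V i u (x u) * Real.exp (-(F u)) with hW
    have hWanti : AntitoneOn W (Set.Icc (t k) (t (k + 1))) := by
      apply antitoneOn_of_deriv_nonpos (convex_Icc _ _)
      · exact (hV_cont k).mul (((hFcont i (t k)).neg.rexp).continuousOn)
      · rw [interior_Icc]
        intro u hu
        have hVd : DifferentiableAt ℝ (fun u => V i u (x u)) u :=
          ((hV_diff k) u hu).differentiableAt (Ioo_mem_nhds hu.1 hu.2)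
        exact (hVd.mul (((hFd i (t k) u).neg.exp).differentiableAt)).differentiableWithinAt
      · rw [interior_Icc]
        intro u hu
        have hVd : HasDerivAt (fun u => V i u (x u)) (deriv (fun u => V i u (x u)) u) u :=
          (((hV_diff k) u hu).differentiableAt (Ioo_mem_nhds hu.1 hu.2)).hasDerivAt
        have hE : HasDerivAt (fun u => Real.exp (-(F u)))
            (Real.exp (-(F u)) * -(lam i u)) u := ((hFd i (t k) u).neg).exp
        have hWd : HasDerivAt W (deriv (fun u => V i u (x u)) u * Real.exp (-(F u)) +
            V i u (x u) * (Real.exp (-(F u)) * -(lam i u))) u := hVd.mul hE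
        rw [hWd.deriv]
        have h1 : deriv (fun u => V i u (x u)) u ≤ lam i u * V i u (x u) := hV_deriv k u hu
        nlinarith [Real.exp_pos (-(F u)),
          mul_le_mul_of_nonneg_right h1 (Real.exp_pos (-(F u))).le]
    have h2 : W s ≤ W (t k) := hWanti (left_mem_Icc.2 (le_trans hs.1 hs.2)) hs hs.1
    have hWtk : W (t k) = V i (t k) (x (t k)) := by
      simp [hW, hF, intervalIntegral.integral_same]
    rw [hWtk] at h2
    calc V i s (x s) = V i s (x s) * Real.exp (-(F s)) * Real.exp (F s) := by
          rw [mul_assoc, ← Real.exp_add]; simp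
      _ ≤ V i (t k) (x (t k)) * Real.exp (F s) :=
          mul_le_mul_of_nonneg_right h2 (Real.exp_pos _).le
  -- every `s ≥ t 0` lies in some switching interval
  have findk : ∀ s, t 0 ≤ s → ∃ k, s ∈ Set.Ico (t k) (t (k + 1)) := by
    intro s hs
    have hex : ∃ m, s < t m := ((ht_top.eventually (eventually_gt_atTop s)).exists)
    have hK1 : 1 ≤ Nat.find hex := by
      rcases Nat.eq_zero_or_pos (Nat.find hex) with h | h
      · exact absurd (h ▸ Nat.find_spec hex) (not_lt.2 hs)
      · exact h
    refine ⟨Nat.find hex - 1, ?_, ?_⟩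
    · have := Nat.find_min hex (m := Nat.find hex - 1) (by omega)
      exact not_lt.1 this
    · have : Nat.find hex - 1 + 1 = Nat.find hex := by omega
      rw [this]; exact Nat.find_spec hex
  -- a.e. identification of the switched integrand on each interval
  have haec : ∀ k, ∀ s, s ≤ t (k + 1) → ∀ᵐ h ∂(volume : Measure ℝ),
      h ∈ Set.Ioc (t k) s → lam (σf h) h = lam (idx k) h := by
    intro k s hsle
    rw [ae_iff]
    have hsub : {a | ¬(a ∈ Set.Ioc (t k) s → lam (σf a) a = lam (idx k) a)} ⊆ {t (k + 1)} := by
      intro h hh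
      simp only [Set.mem_setOf_eq, not_forall] at hh
      obtain ⟨hmem, hne⟩ := hh
      by_contra hne'
      have hico : h ∈ Set.Ico (t k) (t (k + 1)) := by
        refine ⟨hmem.1.le, lt_of_le_of_ne (le_trans hmem.2 hsle) ?_⟩
        simpa using hne'
      exact hne (by rw [hσ k h hico])
    exact measure_mono_null hsub Real.volume_singleton
  have hIntks : ∀ k s, t k ≤ s → s ≤ t (k + 1) →
      IntervalIntegrable (fun h => lam (σf h) h) volume (t k) s := by
    intro k s h1 h2
    rw [intervalIntegrable_iff]
    have : IntegrableOn (fun h => lam (idx k) h) (Set.uIoc (t k) s) volume := by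
      rw [← intervalIntegrable_iff]
      exact (hlam (idx k)).intervalIntegrable _ _
    apply this.congr
    rw [Set.uIoc_of_le h1]
    have := (ae_restrict_iff' measurableSet_Ioc).2 (haec k s h2)
    filter_upwards [this] with h hh
    exact hh.symm
  have hIcongr : ∀ k s, t k ≤ s → s ≤ t (k + 1) →
      (∫ h in (t k)..s, lam (σf h) h) = ∫ h in (t k)..s, lam (idx k) h := by
    intro k s h1 h2
    apply intervalIntegral.integral_congr_ae
    rw [Set.uIoc_of_le h1]
    exact haec k s h2
  have hIntc : ∀ k, IntervalIntegrable (fun h => lam (σf h) h) volume (t 0) (t k) := by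
    intro k
    induction k with
    | zero => exact IntervalIntegrable.refl
    | succ k ih => exact ih.trans (hIntks k (t (k + 1)) (htlt k).le le_rfl)
  -- splitting `g` on each interval
  have hgsplit : ∀ k, ∀ s ∈ Set.Ico (t k) (t (k + 1)),
      g s = g (t k) + ∫ h in (t k)..s, lam (idx k) h := by
    intro k s hs
    rw [hg k s hs, hg k (t k) ⟨le_refl _, htlt k⟩, ← hIcongr k s hs.1 hs.2.le,
      ← intervalIntegral.integral_add_adjacent_intervals (hIntc k) (hIntks k s hs.1 hs.2.le)]
    ring
  -- value of `exp (g (t (k+1)))`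
  have hμpos : ∀ i, (0:ℝ) < μ i := fun i => lt_of_lt_of_le zero_lt_one (hμ i)
  have hgstep : ∀ k, g (t (k + 1)) = g (t k) + (∫ h in (t k)..(t (k + 1)), lam (idx k) h)
      + Real.log (μ (idx (k + 1))) := by
    intro k
    rw [hg (k + 1) (t (k + 1)) ⟨le_refl _, htlt (k + 1)⟩, hg k (t k) ⟨le_refl _, htlt k⟩,
      ← hIcongr k (t (k + 1)) (htlt k).le le_rfl,
      ← intervalIntegral.integral_add_adjacent_intervals (hIntc k)
        (hIntks k (t (k + 1)) (htlt k).le le_rfl),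
      Finset.sum_Icc_succ_top (Nat.le_add_left 1 k)]
    ring
  -- inductive Lyapunov bound at switching times
  have hVtk : ∀ k, V (idx k) (t k) (x (t k)) ≤
      Real.exp (g (t k)) * V (idx 0) (t 0) (x (t 0)) := by
    intro k
    induction k with
    | zero =>
        have hg0 : g (t 0) = 0 := by
          rw [hg 0 (t 0) ⟨le_refl _, htlt 0⟩]
          simp
        rw [hg0, Real.exp_zero, one_mul]
    | succ k ih =>
        have h1 := hjump k
        have h2 := gron k (t (k + 1)) ⟨(htlt k).le, le_refl _⟩
        have h3 : V (idx k) (t k) (x (t k)) * Real.exp (∫ h in (t k)..(t (k + 1)), lam (idx k) h)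
            ≤ Real.exp (g (t k)) * V (idx 0) (t 0) (x (t 0)) *
              Real.exp (∫ h in (t k)..(t (k + 1)), lam (idx k) h) :=
          mul_le_mul_of_nonneg_right ih (Real.exp_pos _).le
        calc V (idx (k + 1)) (t (k + 1)) (x (t (k + 1)))
            ≤ μ (idx (k + 1)) * V (idx k) (t (k + 1)) (x (t (k + 1))) := h1
          _ ≤ μ (idx (k + 1)) * (Real.exp (g (t k)) * V (idx 0) (t 0) (x (t 0)) *
              Real.exp (∫ h in (t k)..(t (k + 1)), lam (idx k) h)) :=
              mul_le_mul_of_nonneg_left (le_trans h2 h3) (hμpos _).le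
          _ = Real.exp (g (t (k + 1))) * V (idx 0) (t 0) (x (t 0)) := by
              rw [hgstep k, Real.exp_add, Real.exp_add, Real.exp_log (hμpos _)]
              ring
  -- main pointwise bound
  have hbound : ∀ s, t 0 ≤ s → α₁ ‖x s‖ ≤ Real.exp (g s) * α₂ ‖x (t 0)‖ := by
    intro s hs
    obtain ⟨k, hk⟩ := findk s hs
    have h1 : α₁ ‖x s‖ ≤ V (idx k) s (x s) := (hsandwich _ s hs _).1
    have h2 := gron k s ⟨hk.1, hk.2.le⟩
    have h3 : V (idx k) (t k) (x (t k)) * Real.exp (∫ h in (t k)..s, lam (idx k) h)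
        ≤ Real.exp (g (t k)) * V (idx 0) (t 0) (x (t 0)) *
          Real.exp (∫ h in (t k)..s, lam (idx k) h) :=
      mul_le_mul_of_nonneg_right (hVtk k) (Real.exp_pos _).le
    have h4 : Real.exp (g (t k)) * V (idx 0) (t 0) (x (t 0)) *
        Real.exp (∫ h in (t k)..s, lam (idx k) h) =
        Real.exp (g s) * V (idx 0) (t 0) (x (t 0)) := by
      rw [hgsplit k s hk, Real.exp_add]; ring
    have h5 : V (idx 0) (t 0) (x (t 0)) ≤ α₂ ‖x (t 0)‖ := (hsandwich _ (t 0) le_rfl _).2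
    calc α₁ ‖x s‖ ≤ V (idx k) s (x s) := h1
      _ ≤ Real.exp (g s) * V (idx 0) (t 0) (x (t 0)) := by rw [← h4]; exact le_trans h2 h3
      _ ≤ Real.exp (g s) * α₂ ‖x (t 0)‖ := mul_le_mul_of_nonneg_left h5 (Real.exp_pos _).le
  -- `g` tends to `-∞`
  have hgbot : Tendsto g atTop atBot := by
    have h1 : Tendsto (fun s => (g s / (s - t 0)) * (s - t 0)) atTop atBot :=
      hglim.neg_mul_atTop hc (tendsto_atTop_add_const_right _ _ tendsto_id)
    refine h1.congr' ?_
    filter_upwards [eventually_gt_atTop (t 0)] with s hs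
    rw [div_mul_cancel₀]
    exact sub_ne_zero.2 (ne_of_gt hs)
  -- `g` is bounded above on `[t₀, ∞)`
  have hbddg : BddAbove (g '' Set.Ici (t 0)) := by
    obtain ⟨T, hT⟩ := (hgbot.eventually (eventually_le_atBot 0)).exists_forall_of_atTop
    obtain ⟨K, hK⟩ := (ht_top.eventually (eventually_ge_atTop T)).exists
    have hsub : g '' Set.Ici (t 0) ⊆
        (⋃ j ∈ Set.Iio K, g '' Set.Ico (t j) (t (j + 1))) ∪ Set.Iic 0 := by
      rintro v ⟨s, hs, rfl⟩
      obtain ⟨k, hk⟩ := findk s hs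
      by_cases hkK : k < K
      · left
        exact Set.mem_biUnion (Set.mem_Iio.2 hkK) (Set.mem_image_of_mem g hk)
      · right
        have : T ≤ s := le_trans hK (le_trans (ht_mono.monotone (not_lt.1 hkK)) hk.1)
        exact hT s this
    apply BddAbove.mono hsub
    apply BddAbove.union
    · rw [Set.Finite.bddAbove_biUnion (Set.finite_Iio K)]
      intro j _
      have hcont : ContinuousOn (fun s => g (t j) + ∫ h in (t j)..s, lam (idx j) h)
          (Set.Icc (t j) (t (j + 1))) :=
        (continuous_const.add (hFcont (idx j) (t j))).continuousOn
      have him : g '' Set.Ico (t j) (t (j + 1)) ⊆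
          (fun s => g (t j) + ∫ h in (t j)..s, lam (idx j) h) '' Set.Icc (t j) (t (j + 1)) := by
        rintro v ⟨s, hs, rfl⟩
        exact ⟨s, ⟨hs.1, hs.2.le⟩, (hgsplit j s hs).symm⟩
      exact BddAbove.mono him ((isCompact_Icc.image_of_continuousOn hcont).bddAbove)
    · exact bddAbove_Iic
  refine ⟨?_, hbddg, ?_⟩
  · -- convergence of the trajectory to 0
    have hAtend : Tendsto (fun s => Real.exp (g s) * α₂ ‖x (t 0)‖) atTop (𝓝 0) := by
      have := (Real.tendsto_exp_atBot.comp hgbot).mul_const (α₂ ‖x (t 0)‖)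
      simpa using this
    have hα₁tend : Tendsto (fun s => α₁ ‖x s‖) atTop (𝓝 0) := by
      apply tendsto_of_tendsto_of_tendsto_of_le_of_le' tendsto_const_nhds hAtend
      · filter_upwards [eventually_ge_atTop (t 0)] with s _
        exact hα₁nn _ (norm_nonneg _)
      · filter_upwards [eventually_ge_atTop (t 0)] with s hs
        exact hbound s hs
    have hnorm : Tendsto (fun s => ‖x s‖) atTop (𝓝 0) := by
      rw [tendsto_order]
      constructor
      · intro a ha
        filter_upwards with s
        exact lt_of_lt_of_le ha (norm_nonneg _)
      · intro ε hε
        have hεpos : 0 < α₁ ε := by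
          have := hα₁m (Set.self_mem_Ici) (Set.mem_Ici.2 hε.le) hε
          rwa [hα₁0] at this
        filter_upwards [hα₁tend.eventually (gt_mem_nhds hεpos)] with s hs
        by_contra hcon
        push_neg at hcon
        exact absurd hs (not_lt.2 (hα₁m.monotoneOn (Set.mem_Ici.2 hε.le)
          (Set.mem_Ici.2 (norm_nonneg _)) hcon))
    exact tendsto_zero_iff_norm_tendsto_zero.2 hnorm
  · intro s hs
    refine le_trans (hbound s hs) (mul_le_mul_of_nonneg_right ?_ (hα₂nn _ (norm_nonneg _)))
    exact Real.exp_le_exp.2 (le_csSup hbddg (Set.mem_image_of_mem g hs))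
end

section
/- In the switched trajectory setup, assume the Lyapunov conditions (ii) and (iii) hold, that there are constants c > 0 and p > 0 with c·‖x(t)‖^p ≤ V_{σ(t)}(t, x(t)) for all t ≥ t₀, and that V_{i₀}(t₀, x(t₀)) > 0. If there is a constant κ ∈ ℝ such that limsup_{t→∞} g(t)/t ≤ κ, then limsup_{t→∞} (1/t)·ln‖x(t)‖ ≤ κ/p (with the convention that terms with x(t) = 0 are ignored, i.e. the bound ‖x(t)‖^p ≤ (V_{i₀}(t₀,x(t₀))/c)·exp(g(t)) holds for all t ≥ t₀ and yields the stated limsup inequality). In particular, if κ < 0 then limsup_{t→∞} (1/t)·ln‖x(t)‖ < 0. -/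
open Set Filter

lemma gronwall_aux {a b : ℝ} {f lamf : ℝ → ℝ}
    (hlam : Continuous lamf)
    (hf_cont : ContinuousOn f (Set.Icc a b))
    (hf_diff : DifferentiableOn ℝ f (Set.Ioo a b))
    (hf_deriv : ∀ s ∈ Set.Ioo a b, deriv f s ≤ lamf s * f s) :
    ∀ s ∈ Set.Icc a b, f s ≤ f a * Real.exp (∫ h in a..s, lamf h) := by
  set L : ℝ → ℝ := fun s => ∫ h in a..s, lamf h with hLdef
  have hL : ∀ s : ℝ, HasDerivAt L (lamf s) s := by
    intro s
    exact intervalIntegral.integral_hasDerivAt_right (hlam.intervalIntegrable _ _)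
      (hlam.stronglyMeasurableAtFilter _ _) hlam.continuousAt
  have hLcont : Continuous L := by
    rw [continuous_iff_continuousAt]
    exact fun s => (hL s).continuousAt
  set F : ℝ → ℝ := fun s => f s * Real.exp (-(L s)) with hFdef
  have hF_has : ∀ s ∈ Set.Ioo a b, HasDerivAt F
      (deriv f s * Real.exp (-(L s)) + f s * (Real.exp (-(L s)) * (-(lamf s)))) s := by
    intro s hs
    have hfd : HasDerivAt f (deriv f s) s :=
      ((hf_diff s hs).differentiableAt (isOpen_Ioo.mem_nhds hs)).hasDerivAt
    exact hfd.mul ((hL s).neg.exp)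
  have hanti : AntitoneOn F (Set.Icc a b) := by
    apply antitoneOn_of_deriv_nonpos (convex_Icc a b)
    · exact hf_cont.mul ((hLcont.neg.rexp).continuousOn)
    · rw [interior_Icc]
      exact fun s hs => ((hF_has s hs).differentiableAt).differentiableWithinAt
    · rw [interior_Icc]
      intro s hs
      rw [(hF_has s hs).deriv]
      have h1 := hf_deriv s hs
      nlinarith [Real.exp_pos (-(L s))]
  intro s hs
  have hab : a ≤ b := le_trans hs.1 hs.2
  have h0 : F s ≤ F a := hanti (Set.left_mem_Icc.mpr hab) hs hs.1
  have hFa : F a = f a := by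
    simp [hFdef, hLdef, intervalIntegral.integral_same]
  rw [hFa] at h0
  have he : (0:ℝ) < Real.exp (L s) := Real.exp_pos _
  have : f s * Real.exp (-(L s)) * Real.exp (L s) ≤ f a * Real.exp (L s) :=
    mul_le_mul_of_nonneg_right h0 he.le
  rwa [mul_assoc, ← Real.exp_add, neg_add_cancel, Real.exp_zero, mul_one] at this

/-- Switched trajectory with indefinite multiple Lyapunov functions bounded below by
`c ‖x‖^p`: if `limsup g(t)/t ≤ κ` (expressed in ε-form), then
`‖x t‖^p ≤ (V_{i₀}(t₀, x t₀)/c) · exp (g t)` for all `t ≥ t₀` and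
`limsup (1/t) ln ‖x t‖ ≤ κ/p` (in ε-form, ignoring times where `x t = 0`). -/
theorem stmt_10 {𝕊 : Type*} [Fintype 𝕊] (n : ℕ)
    (t : ℕ → ℝ) (ht_mono : StrictMono t)
    (ht_top : Filter.Tendsto t Filter.atTop Filter.atTop)
    (idx : ℕ → 𝕊)
    (σf : ℝ → 𝕊) (hσ : ∀ k, ∀ s ∈ Set.Ico (t k) (t (k + 1)), σf s = idx k)
    (x : ℝ → EuclideanSpace ℝ (Fin n)) (hx_cont : ContinuousOn x (Set.Ici (t 0)))
    (lam : 𝕊 → ℝ → ℝ) (hlam : ∀ i, Continuous (lam i))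
    (μ : 𝕊 → ℝ) (hμ : ∀ i, 1 ≤ μ i)
    (V : 𝕊 → ℝ → EuclideanSpace ℝ (Fin n) → ℝ)
    -- Lyapunov condition (ii)
    (hV_cont : ∀ k, ContinuousOn (fun s => V (idx k) s (x s)) (Set.Icc (t k) (t (k + 1))))
    (hV_diff : ∀ k, DifferentiableOn ℝ (fun s => V (idx k) s (x s))
      (Set.Ioo (t k) (t (k + 1))))
    (hV_deriv : ∀ k, ∀ s ∈ Set.Ioo (t k) (t (k + 1)),
      deriv (fun s' => V (idx k) s' (x s')) s ≤ lam (idx k) s * V (idx k) s (x s))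
    -- Lyapunov condition (iii)
    (hjump : ∀ k, V (idx (k + 1)) (t (k + 1)) (x (t (k + 1))) ≤
      μ (idx (k + 1)) * V (idx k) (t (k + 1)) (x (t (k + 1))))
    -- lower bound on the Lyapunov functions and positivity of the initial value
    (c p : ℝ) (hc : 0 < c) (hp : 0 < p)
    (hlow : ∀ s ≥ t 0, c * ‖x s‖ ^ p ≤ V (σf s) s (x s))
    (hV0 : 0 < V (idx 0) (t 0) (x (t 0)))
    -- the drift functional
    (g : ℝ → ℝ)
    (hg : ∀ k, ∀ s ∈ Set.Ico (t k) (t (k + 1)),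
      g s = (∫ h in (t 0)..s, lam (σf h) h) + ∑ l ∈ Finset.Icc 1 k, Real.log (μ (idx l)))
    -- `limsup g(t)/t ≤ κ` in ε-form
    (κ : ℝ) (hglimsup : ∀ ε > (0 : ℝ), ∀ᶠ s in Filter.atTop, g s / s ≤ κ + ε) :
    (∀ s ≥ t 0, ‖x s‖ ^ p ≤ (V (idx 0) (t 0) (x (t 0)) / c) * Real.exp (g s)) ∧
    (∀ ε > (0 : ℝ), ∀ᶠ s in Filter.atTop,
      x s ≠ 0 → Real.log ‖x s‖ / s ≤ κ / p + ε) := by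
  set V0 : ℝ := V (idx 0) (t 0) (x (t 0)) with hV0def
  have htk : ∀ k, t k < t (k + 1) := fun k => ht_mono (Nat.lt_succ_self k)
  have hμpos : ∀ i, (0:ℝ) < μ i := fun i => lt_of_lt_of_le one_pos (hμ i)
  -- a.e. avoid the single switching point
  have hae_ne : ∀ a : ℝ, ∀ᵐ h ∂(MeasureTheory.volume : MeasureTheory.Measure ℝ), h ≠ a := by
    intro a
    rw [MeasureTheory.ae_iff]
    have : {h : ℝ | ¬ h ≠ a} = {a} := by ext h; simp
    rw [this]
    exact Real.volume_singleton
  -- a.e. equality of λ_σ with λ_{idx k} on each piece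
  have hae_eq : ∀ k s, s ∈ Set.Icc (t k) (t (k+1)) →
      (fun h => lam (σf h) h) =ᵐ[MeasureTheory.volume.restrict (Set.uIoc (t k) s)]
        fun h => lam (idx k) h := by
    intro k s hs
    have h1 : ∀ᵐ h ∂(MeasureTheory.volume.restrict (Set.uIoc (t k) s)), h ≠ t (k+1) :=
      MeasureTheory.ae_restrict_of_ae (hae_ne (t (k+1)))
    have h2 := MeasureTheory.ae_restrict_mem (μ := MeasureTheory.volume)
      (measurableSet_uIoc (a := t k) (b := s))
    filter_upwards [h1, h2] with h hne hmem
    have : h ∈ Set.Ico (t k) (t (k+1)) := by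
      rw [Set.uIoc_of_le hs.1] at hmem
      exact ⟨hmem.1.le, lt_of_le_of_ne (le_trans hmem.2 hs.2) hne⟩
    rw [hσ k h this]
  have hint_sub : ∀ k s, s ∈ Set.Icc (t k) (t (k+1)) →
      IntervalIntegrable (fun h => lam (σf h) h) MeasureTheory.volume (t k) s := by
    intro k s hs
    rw [intervalIntegrable_iff]
    exact (MeasureTheory.Integrable.congr
      (intervalIntegrable_iff.mp ((hlam (idx k)).intervalIntegrable (t k) s))
      (hae_eq k s hs).symm)
  have hint0 : ∀ k, IntervalIntegrable (fun h => lam (σf h) h) MeasureTheory.volume (t 0) (t k) := by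
    intro k
    induction k with
    | zero => exact IntervalIntegrable.refl
    | succ k ih =>
        exact ih.trans (hint_sub k (t (k+1)) (Set.right_mem_Icc.mpr (htk k).le))
  have hIeq : ∀ k s, s ∈ Set.Icc (t k) (t (k+1)) →
      (∫ h in (t k)..s, lam (σf h) h) = ∫ h in (t k)..s, lam (idx k) h := by
    intro k s hs
    exact intervalIntegral.integral_congr_ae
      ((MeasureTheory.ae_restrict_iff' measurableSet_uIoc).mp (hae_eq k s hs))
  have hsplit : ∀ k s, s ∈ Set.Icc (t k) (t (k+1)) →
      (∫ h in (t 0)..s, lam (σf h) h) =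
        (∫ h in (t 0)..(t k), lam (σf h) h) + ∫ h in (t k)..s, lam (idx k) h := by
    intro k s hs
    rw [← hIeq k s hs]
    exact (intervalIntegral.integral_add_adjacent_intervals (hint0 k) (hint_sub k s hs)).symm
  -- the drift functional at `t k`
  set G : ℕ → ℝ := fun k =>
    (∫ h in (t 0)..(t k), lam (σf h) h) + ∑ l ∈ Finset.Icc 1 k, Real.log (μ (idx l)) with hGdef
  -- piecewise Grönwall
  have gron : ∀ k, ∀ s ∈ Set.Icc (t k) (t (k+1)),
      V (idx k) s (x s) ≤ V (idx k) (t k) (x (t k)) *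
        Real.exp (∫ h in (t k)..s, lam (idx k) h) :=
    fun k => gronwall_aux (hlam (idx k)) (hV_cont k) (hV_diff k) (hV_deriv k)
  -- main inductive bound
  have hmain : ∀ k, ∀ s ∈ Set.Icc (t k) (t (k+1)),
      V (idx k) s (x s) ≤ V0 * Real.exp (G k + ∫ h in (t k)..s, lam (idx k) h) := by
    intro k
    induction k with
    | zero =>
        intro s hs
        have hG0 : G 0 = 0 := by
          simp [hGdef, intervalIntegral.integral_same]
        rw [hG0, zero_add]
        exact gron 0 s hs
    | succ k ih =>
        have hend := ih (t (k+1)) (Set.right_mem_Icc.mpr (htk k).le)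
        have hGk1 : G (k+1) = G k + (∫ h in (t k)..(t (k+1)), lam (idx k) h)
            + Real.log (μ (idx (k+1))) := by
          have h1 := hsplit k (t (k+1)) (Set.right_mem_Icc.mpr (htk k).le)
          have h2 : ∑ l ∈ Finset.Icc 1 (k+1), Real.log (μ (idx l)) =
              (∑ l ∈ Finset.Icc 1 k, Real.log (μ (idx l))) + Real.log (μ (idx (k+1))) :=
            Finset.sum_Icc_succ_top (Nat.one_le_iff_ne_zero.mpr (Nat.succ_ne_zero k)) _
          simp only [hGdef]
          rw [h1, h2]; ring
        have hB1 : V (idx (k+1)) (t (k+1)) (x (t (k+1))) ≤ V0 * Real.exp (G (k+1)) := by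
          calc V (idx (k+1)) (t (k+1)) (x (t (k+1)))
              ≤ μ (idx (k+1)) * V (idx k) (t (k+1)) (x (t (k+1))) := hjump k
            _ ≤ μ (idx (k+1)) * (V0 * Real.exp (G k + ∫ h in (t k)..(t (k+1)), lam (idx k) h)) :=
                mul_le_mul_of_nonneg_left hend (hμpos _).le
            _ = V0 * Real.exp (G (k+1)) := by
                simp only [hGk1, Real.exp_add, Real.exp_log (hμpos (idx (k+1)))]
                ring
        intro s hs
        calc V (idx (k+1)) s (x s)
            ≤ V (idx (k+1)) (t (k+1)) (x (t (k+1))) *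
              Real.exp (∫ h in (t (k+1))..s, lam (idx (k+1)) h) := gron (k+1) s hs
          _ ≤ V0 * Real.exp (G (k+1)) * Real.exp (∫ h in (t (k+1))..s, lam (idx (k+1)) h) :=
              mul_le_mul_of_nonneg_right hB1 (Real.exp_pos _).le
          _ = V0 * Real.exp (G (k+1) + ∫ h in (t (k+1))..s, lam (idx (k+1)) h) := by
              rw [mul_assoc, ← Real.exp_add]
  -- locate each time in its switching interval
  have hloc : ∀ s, t 0 ≤ s → ∃ k, s ∈ Set.Ico (t k) (t (k+1)) := by
    intro s hs
    have hex : ∃ N, s < t N := (ht_top.eventually (eventually_gt_atTop s)).exists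
    set k0 := Nat.find hex with hk0
    have hk0spec : s < t k0 := Nat.find_spec hex
    have hk0pos : k0 ≠ 0 := by
      intro h
      rw [h] at hk0spec
      exact absurd hk0spec (not_lt.mpr hs)
    obtain ⟨k, hk⟩ := Nat.exists_eq_succ_of_ne_zero hk0pos
    refine ⟨k, ?_, ?_⟩
    · have hklt : k < Nat.find hex := by omega
      exact not_lt.mp (Nat.find_min hex hklt)
    · rw [hk] at hk0spec; exact hk0spec
  -- the key pointwise bound on V
  have hkey : ∀ s, t 0 ≤ s → V (σf s) s (x s) ≤ V0 * Real.exp (g s) := by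
    intro s hs
    obtain ⟨k, hk⟩ := hloc s hs
    have hσs : σf s = idx k := hσ k s hk
    have hgs : g s = G k + ∫ h in (t k)..s, lam (idx k) h := by
      rw [hg k s hk, hsplit k s ⟨hk.1, hk.2.le⟩, hGdef]; ring
    rw [hσs, hgs]
    exact hmain k s ⟨hk.1, hk.2.le⟩
  have part1 : ∀ s ≥ t 0, ‖x s‖ ^ p ≤ (V0 / c) * Real.exp (g s) := by
    intro s hs
    have h1 := le_trans (hlow s hs) (hkey s hs)
    rw [div_mul_eq_mul_div, le_div_iff₀ hc]
    linarith [h1, mul_comm c (‖x s‖ ^ p)]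
  refine ⟨part1, ?_⟩
  intro ε hε
  have hε' : (0:ℝ) < p * ε / 2 := by positivity
  have hCpos : (0:ℝ) < V0 / c := div_pos hV0 hc
  have htend : Filter.Tendsto (fun s : ℝ => Real.log (V0 / c) / (p * s)) Filter.atTop (nhds 0) := by
    apply Filter.Tendsto.div_atTop (tendsto_const_nhds)
    exact Filter.Tendsto.const_mul_atTop hp Filter.tendsto_id
  have E4 : ∀ᶠ s in Filter.atTop, Real.log (V0 / c) / (p * s) ≤ ε / 2 :=
    htend.eventually (eventually_le_nhds (by linarith))
  filter_upwards [eventually_ge_atTop (t 0), eventually_gt_atTop (0:ℝ),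
    hglimsup (p * ε / 2) hε', E4] with s hs1 hs2 hs3 hs4 hxs
  have hxp : (0:ℝ) < ‖x s‖ := norm_pos_iff.mpr hxs
  have h1 := part1 s hs1
  have hrpos : (0:ℝ) < ‖x s‖ ^ p := Real.rpow_pos_of_pos hxp p
  have hL : p * Real.log ‖x s‖ ≤ Real.log (V0 / c) + g s := by
    have h2 := Real.log_le_log hrpos h1
    rwa [Real.log_rpow hxp, Real.log_mul (ne_of_gt hCpos) (Real.exp_ne_zero _),
      Real.log_exp] at h2
  have h2 : Real.log ‖x s‖ / s ≤ (Real.log (V0 / c) + g s) / (p * s) := by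
    rw [div_le_div_iff₀ hs2 (by positivity)]
    calc Real.log ‖x s‖ * (p * s) = (p * Real.log ‖x s‖) * s := by ring
      _ ≤ (Real.log (V0 / c) + g s) * s := mul_le_mul_of_nonneg_right hL hs2.le
  have h3 : (Real.log (V0 / c) + g s) / (p * s) =
      Real.log (V0 / c) / (p * s) + (g s / s) / p := by
    field_simp
  have h4 : (g s / s) / p ≤ (κ + p * ε / 2) / p := by gcongr
  have h5 : (κ + p * ε / 2) / p = κ / p + ε / 2 := by
    field_simp
  calc Real.log ‖x s‖ / s ≤ Real.log (V0 / c) / (p * s) + (g s / s) / p := by rw [← h3]; exact h2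
    _ ≤ ε / 2 + (κ / p + ε / 2) := by rw [← h5]; exact add_le_add hs4 h4
    _ = κ / p + ε := by ring
end
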